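/- For n ≥ 1, the space M⁽ⁿ⁾ ∩ M̄⁽ⁿ⁾ of homogeneous monogenic constants of degree n on ℝ³ has real dimension 2, and it is contained in Vec M⁽ⁿ⁾, the space of vector parts of homogeneous monogenic polynomials of degree n. -/

import Mathlib

open scoped Quaternion
open MeasureTheory

noncomputable section

/-- Points of `ℝ³`, identified with quaternions `x₀ + x₁e₁ + x₂e₂` with zero `e₃`-part. -/
abbrev R3 := EuclideanSpace ℝ (Fin 3)

/-- The quaternion unit `e₁`. -/
def e1 : ℍ[ℝ] := ⟨0, 1, 0, 0⟩
/-- The quaternion unit `e₂`. -/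
def e2 : ℍ[ℝ] := ⟨0, 0, 1, 0⟩

/-- Partial derivative `∂ᵢ` of a function on `ℝ³`. -/
def pd {E : Type*} [NormedAddCommGroup E] [NormedSpace ℝ E]
    (i : Fin 3) (f : R3 → E) (x : R3) : E :=
  fderiv ℝ f x (EuclideanSpace.single i 1)

/-- `D̄f = ∂₀f + e₁∂₁f + e₂∂₂f` (acting from the left). -/
def DbarL (f : R3 → ℍ[ℝ]) (x : R3) : ℍ[ℝ] :=
  pd 0 f x + e1 * pd 1 f x + e2 * pd 2 f x

/-- `fD̄ = ∂₀f + (∂₁f)e₁ + (∂₂f)e₂` (acting from the right). -/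
def DbarR (f : R3 → ℍ[ℝ]) (x : R3) : ℍ[ℝ] :=
  pd 0 f x + pd 1 f x * e1 + pd 2 f x * e2

/-- `Df = ∂₀f − e₁∂₁f − e₂∂₂f`. -/
def DL (f : R3 → ℍ[ℝ]) (x : R3) : ℍ[ℝ] :=
  pd 0 f x - e1 * pd 1 f x - e2 * pd 2 f x

/-- The quaternion `a + b e₁ + c e₂` (zero `e₃`-part). -/
def mkQ (a b c : ℝ) : ℍ[ℝ] := ⟨a, b, c, 0⟩

/-- `ℝ³`-valued homogeneous monogenic polynomials of degree `n`: each component is a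
homogeneous polynomial of degree `n`, the `e₃`-component vanishes, and `D̄f = 0`. -/
def MonoPoly (n : ℕ) : Set (R3 → ℍ[ℝ]) :=
  {f | (∃ p₀ p₁ p₂ : MvPolynomial (Fin 3) ℝ,
          p₀.IsHomogeneous n ∧ p₁.IsHomogeneous n ∧ p₂.IsHomogeneous n ∧
          ∀ x : R3, f x = mkQ (MvPolynomial.eval (fun i => x i) p₀)
            (MvPolynomial.eval (fun i => x i) p₁) (MvPolynomial.eval (fun i => x i) p₂)) ∧
      ∀ x, DbarL f x = 0}

/-- `ℝ³`-valued homogeneous antimonogenic polynomials of degree `n` (`Df = 0`). -/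
def AntiPoly (n : ℕ) : Set (R3 → ℍ[ℝ]) :=
  {f | (∃ p₀ p₁ p₂ : MvPolynomial (Fin 3) ℝ,
          p₀.IsHomogeneous n ∧ p₁.IsHomogeneous n ∧ p₂.IsHomogeneous n ∧
          ∀ x : R3, f x = mkQ (MvPolynomial.eval (fun i => x i) p₀)
            (MvPolynomial.eval (fun i => x i) p₁) (MvPolynomial.eval (fun i => x i) p₂)) ∧
      ∀ x, DL f x = 0}

/-- `ℝ³`-valued homogeneous harmonic polynomials of degree `n`. -/
def HarmPoly (n : ℕ) : Set (R3 → ℍ[ℝ]) :=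
  {f | (∃ p₀ p₁ p₂ : MvPolynomial (Fin 3) ℝ,
          p₀.IsHomogeneous n ∧ p₁.IsHomogeneous n ∧ p₂.IsHomogeneous n ∧
          ∀ x : R3, f x = mkQ (MvPolynomial.eval (fun i => x i) p₀)
            (MvPolynomial.eval (fun i => x i) p₁) (MvPolynomial.eval (fun i => x i) p₂)) ∧
      ∀ x, pd 0 (pd 0 f) x + pd 1 (pd 1 f) x + pd 2 (pd 2 f) x = 0}

/-! If `f` satisfies both `D̄f = 0` and `Df = 0`, then half their sum and half their difference
give `∂₀f = 0` and `e₁∂₁f + e₂∂₂f = 0`. In components this says that `f₀` has vanishing gradient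
(so `f₀ = 0` in positive degree) and that `f₁ - i f₂` is a holomorphic polynomial in `x₁ + i x₂`,
independent of `x₀`. Being homogeneous of degree `n`, it is `c (x₁ + i x₂) ^ n` for some `c ∈ ℂ`,
which gives the dimension `2`; and `f` is its own vector part. The classification goes by induction
on `n`: `∂₁` maps such pairs of degree `n + 1` to pairs of degree `n`, injectively by Euler's
identity. -/

open MvPolynomial

namespace MvPolynomial

variable {σ R : Type*} [CommSemiring R]

theorem pderiv_pderiv_comm (i j : σ) (p : MvPolynomial σ R) :
    pderiv i (pderiv j p) = pderiv j (pderiv i p) := by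
  classical
  induction p using MvPolynomial.induction_on with
  | C a => simp
  | add p q hp hq => simp [hp, hq]
  | mul_X p k hp =>
    simp only [pderiv_mul, map_add, hp, pderiv_X, Pi.single_apply]
    split_ifs <;> simp only [pderiv_one, map_zero, mul_zero, add_zero]; ring

theorem IsHomogeneous.smul {φ : MvPolynomial σ R} {n : ℕ} (h : φ.IsHomogeneous n) (a : R) :
    (a • φ).IsHomogeneous n := by
  rw [smul_eq_C_mul]
  exact h.C_mul a

theorem IsHomogeneous.eq_zero_of_forall_pderiv_eq_zero {K : Type*} [Field K] [CharZero K]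
    [Fintype σ] {φ : MvPolynomial σ K} {n : ℕ} (h : φ.IsHomogeneous n) (hn : n ≠ 0)
    (hφ : ∀ i, pderiv i φ = 0) : φ = 0 := by
  have euler := h.sum_X_mul_pderiv
  simp only [hφ, mul_zero, Finset.sum_const_zero] at euler
  exact (smul_eq_zero.mp euler.symm).resolve_left hn

theorem hasFDerivAt_eval {𝕜 : Type*} [NontriviallyNormedField 𝕜] [Fintype σ]
    (p : MvPolynomial σ 𝕜) (v : σ → 𝕜) :
    HasFDerivAt (fun w => eval w p)
      (∑ i, eval v (pderiv i p) • ContinuousLinearMap.proj (R := 𝕜) (φ := fun _ : σ => 𝕜) i) v := by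
  classical
  induction p using MvPolynomial.induction_on with
  | C a =>
    simp only [eval_C]
    refine (hasFDerivAt_const (𝕜 := 𝕜) a v).congr_fderiv ?_
    ext w
    simp
  | add p q hp hq =>
    simp only [map_add]
    refine (hp.add hq).congr_fderiv ?_
    ext w
    simp [add_mul, Finset.sum_add_distrib]
  | mul_X p i hp =>
    simp only [map_mul, eval_X]
    refine (hp.mul (hasFDerivAt_apply i v)).congr_fderiv ?_
    ext w
    simp [pderiv_X, Pi.single_apply, apply_ite (eval v), mul_add, Finset.sum_add_distrib,
      Finset.mul_sum, mul_left_comm, mul_comm]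

end MvPolynomial

section CRPair

variable {R : Type*} [CommRing R]

/-- `(p₁, -p₂)` satisfies the Cauchy–Riemann equations in `(x₁, x₂)`, and neither depends
on `x₀`. -/
def IsCRPair (p₁ p₂ : MvPolynomial (Fin 3) R) : Prop :=
  pderiv 0 p₁ = 0 ∧ pderiv 0 p₂ = 0 ∧ pderiv 1 p₁ + pderiv 2 p₂ = 0 ∧ pderiv 1 p₂ = pderiv 2 p₁

namespace IsCRPair

variable {p₁ p₂ q₁ q₂ : MvPolynomial (Fin 3) R}

theorem add (hp : IsCRPair p₁ p₂) (hq : IsCRPair q₁ q₂) : IsCRPair (p₁ + q₁) (p₂ + q₂) := by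
  obtain ⟨hp₁, hp₂, hp₃, hp₄⟩ := hp
  obtain ⟨hq₁, hq₂, hq₃, hq₄⟩ := hq
  refine ⟨?_, ?_, ?_, ?_⟩ <;> simp only [map_add] <;> grind

theorem smul (hp : IsCRPair p₁ p₂) (a : R) : IsCRPair (a • p₁) (a • p₂) := by
  obtain ⟨hp₁, hp₂, hp₃, hp₄⟩ := hp
  refine ⟨?_, ?_, ?_, ?_⟩ <;> simp only [Derivation.map_smul, ← smul_add] <;> simp [*]

theorem sub (hp : IsCRPair p₁ p₂) (hq : IsCRPair q₁ q₂) : IsCRPair (p₁ - q₁) (p₂ - q₂) := by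
  simpa [sub_eq_add_neg] using hp.add (hq.smul (-1))

theorem pderiv_one (hp : IsCRPair p₁ p₂) : IsCRPair (pderiv 1 p₁) (pderiv 1 p₂) := by
  obtain ⟨hp₁, hp₂, hp₃, hp₄⟩ := hp
  refine ⟨?_, ?_, ?_, ?_⟩ <;> simp only [pderiv_pderiv_comm _ (1 : Fin 3), ← map_add] <;> simp [*]

end IsCRPair

variable (R)

/-- `(reImPow R n).1 + i (reImPow R n).2 = (X₁ + i X₂) ^ n`. -/
def reImPow : ℕ → MvPolynomial (Fin 3) R × MvPolynomial (Fin 3) R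
  | 0 => (1, 0)
  | n + 1 =>
    (X 1 * (reImPow n).1 - X 2 * (reImPow n).2, X 1 * (reImPow n).2 + X 2 * (reImPow n).1)

theorem isHomogeneous_reImPow (n : ℕ) :
    (reImPow R n).1.IsHomogeneous n ∧ (reImPow R n).2.IsHomogeneous n := by
  induction n with
  | zero => exact ⟨isHomogeneous_one _ _, isHomogeneous_zero _ _ _⟩
  | succ n ih =>
    have hX (i : Fin 3) : (X i : MvPolynomial (Fin 3) R).IsHomogeneous 1 := isHomogeneous_X R i
    simp only [reImPow, add_comm n]
    exact ⟨((hX 1).mul ih.1).sub ((hX 2).mul ih.2), ((hX 1).mul ih.2).add ((hX 2).mul ih.1)⟩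

theorem pderiv_zero_reImPow (n : ℕ) :
    pderiv 0 (reImPow R n).1 = 0 ∧ pderiv 0 (reImPow R n).2 = 0 := by
  induction n with
  | zero => simp [reImPow]
  | succ n ih => simp [reImPow, ih, pderiv_X]

theorem pderiv_reImPow_succ (n : ℕ) :
    pderiv 1 (reImPow R (n + 1)).1 = (n + 1 : R) • (reImPow R n).1 ∧
    pderiv 2 (reImPow R (n + 1)).1 = -((n + 1 : R) • (reImPow R n).2) ∧
    pderiv 1 (reImPow R (n + 1)).2 = (n + 1 : R) • (reImPow R n).2 ∧
    pderiv 2 (reImPow R (n + 1)).2 = (n + 1 : R) • (reImPow R n).1 := by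
  induction n with
  | zero => simp [reImPow, pderiv_X]
  | succ n ih =>
    obtain ⟨h₁, h₂, h₃, h₄⟩ := ih
    rw [reImPow]
    simp only [pderiv_mul, map_add, map_sub, h₁, h₂, h₃, h₄, pderiv_X, Pi.single_apply]
    simp only [smul_eq_C_mul, reImPow, ↓reduceIte, Fin.reduceEq, one_mul, zero_mul, zero_add,
      C_add, C_1, map_natCast, Nat.cast_add, Nat.cast_one, mul_neg]
    refine ⟨?_, ?_, ?_, ?_⟩ <;> ring

theorem eval_reImPow {v : Fin 3 → R} (h₁ : v 1 = 1) (h₂ : v 2 = 0) (n : ℕ) :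
    eval v (reImPow R n).1 = 1 ∧ eval v (reImPow R n).2 = 0 := by
  induction n with
  | zero => simp [reImPow]
  | succ n ih => simp [reImPow, h₁, h₂, ih]

theorem isCRPair_reImPow (n : ℕ) :
    IsCRPair (reImPow R n).1 (-(reImPow R n).2) ∧ IsCRPair (reImPow R n).2 (reImPow R n).1 := by
  obtain ⟨h₀₁, h₀₂⟩ := pderiv_zero_reImPow R n
  cases n with
  | zero => simp [IsCRPair, reImPow]
  | succ n =>
    obtain ⟨h₁, h₂, h₃, h₄⟩ := pderiv_reImPow_succ R n
    refine ⟨⟨?_, ?_, ?_, ?_⟩, ⟨?_, ?_, ?_, ?_⟩⟩ <;> simp [*]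

theorem isCRPair_reImPow_combination (n : ℕ) (a b : R) :
    IsCRPair (a • (reImPow R n).1 + b • (reImPow R n).2)
      (b • (reImPow R n).1 - a • (reImPow R n).2) := by
  have h := ((isCRPair_reImPow R n).1.smul a).add ((isCRPair_reImPow R n).2.smul b)
  rwa [smul_neg, neg_add_eq_sub] at h

theorem isHomogeneous_reImPow_combination (n : ℕ) (a b : R) :
    (a • (reImPow R n).1 + b • (reImPow R n).2).IsHomogeneous n ∧
      (b • (reImPow R n).1 - a • (reImPow R n).2).IsHomogeneous n := by
  obtain ⟨hP, hQ⟩ := isHomogeneous_reImPow R n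
  exact ⟨(hP.smul a).add (hQ.smul b), (hP.smul b).sub (hQ.smul a)⟩

end CRPair

namespace IsCRPair

variable {K : Type*} [Field K] [CharZero K] {p₁ p₂ : MvPolynomial (Fin 3) K} {n : ℕ}

theorem eq_zero_of_pderiv_one_eq_zero (hp : IsCRPair p₁ p₂) (h₁ : p₁.IsHomogeneous n)
    (h₂ : p₂.IsHomogeneous n) (hn : n ≠ 0) (hd₁ : pderiv 1 p₁ = 0) (hd₂ : pderiv 1 p₂ = 0) :
    p₁ = 0 ∧ p₂ = 0 := by
  obtain ⟨h₀₁, h₀₂, hsum, hcomm⟩ := hp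
  have h₂₁ : pderiv 2 p₁ = 0 := hcomm.symm.trans hd₂
  have h₂₂ : pderiv 2 p₂ = 0 := by rw [hd₁, zero_add] at hsum; exact hsum
  refine ⟨h₁.eq_zero_of_forall_pderiv_eq_zero hn ?_, h₂.eq_zero_of_forall_pderiv_eq_zero hn ?_⟩
  · simp [Fin.forall_fin_succ, *]
  · simp [Fin.forall_fin_succ, *]

theorem exists_eq_reImPow (hp : IsCRPair p₁ p₂) (h₁ : p₁.IsHomogeneous n)
    (h₂ : p₂.IsHomogeneous n) :
    ∃ a b : K, p₁ = a • (reImPow K n).1 + b • (reImPow K n).2 ∧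
      p₂ = b • (reImPow K n).1 - a • (reImPow K n).2 := by
  induction n generalizing p₁ p₂ with
  | zero =>
    obtain ⟨a, rfl⟩ : ∃ a, p₁ = C a :=
      ⟨_, totalDegree_eq_zero_iff_eq_C.1 ((totalDegree_zero_iff_isHomogeneous _).2 h₁)⟩
    obtain ⟨b, rfl⟩ : ∃ b, p₂ = C b :=
      ⟨_, totalDegree_eq_zero_iff_eq_C.1 ((totalDegree_zero_iff_isHomogeneous _).2 h₂)⟩
    exact ⟨a, b, by simp [reImPow, C_eq_smul_one], by simp [reImPow, C_eq_smul_one]⟩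
  | succ n ih =>
    obtain ⟨a, b, ha, hb⟩ := ih hp.pderiv_one h₁.pderiv h₂.pderiv
    have hn : (n + 1 : K) ≠ 0 := n.cast_add_one_ne_zero
    obtain ⟨hP₁, -, hQ₁, -⟩ := pderiv_reImPow_succ K n
    set c := a / (n + 1)
    set d := b / (n + 1)
    obtain ⟨hc₁, hc₂⟩ := isHomogeneous_reImPow_combination K (n + 1) c d
    have hd₁ : pderiv 1 (p₁ - (c • (reImPow K (n + 1)).1 + d • (reImPow K (n + 1)).2)) = 0 := by
      simp [ha, hP₁, hQ₁, smul_smul, c, d, div_mul_cancel₀ _ hn]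
    have hd₂ : pderiv 1 (p₂ - (d • (reImPow K (n + 1)).1 - c • (reImPow K (n + 1)).2)) = 0 := by
      simp [hb, hP₁, hQ₁, smul_smul, c, d, div_mul_cancel₀ _ hn]
    have hr := hp.sub (isCRPair_reImPow_combination K (n + 1) c d)
    obtain ⟨hr₁, hr₂⟩ :=
      hr.eq_zero_of_pderiv_one_eq_zero (h₁.sub hc₁) (h₂.sub hc₂) n.succ_ne_zero hd₁ hd₂
    exact ⟨c, d, sub_eq_zero.1 hr₁, sub_eq_zero.1 hr₂⟩

end IsCRPair

theorem EuclideanSpace.hasFDerivAt_eval {𝕜 σ : Type*} [RCLike 𝕜] [Fintype σ]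
    (p : MvPolynomial σ 𝕜) (x : EuclideanSpace 𝕜 σ) :
    HasFDerivAt (fun x : EuclideanSpace 𝕜 σ => eval (fun i => x i) p)
      ((∑ i, eval (fun i => x i) (pderiv i p) •
        ContinuousLinearMap.proj (R := 𝕜) (φ := fun _ : σ => 𝕜) i).comp
          (EuclideanSpace.equiv σ 𝕜).toContinuousLinearMap) x :=
  (MvPolynomial.hasFDerivAt_eval p _).comp x (EuclideanSpace.equiv σ 𝕜).hasFDerivAt

theorem pd_eval (p : MvPolynomial (Fin 3) ℝ) (j : Fin 3) (x : R3) :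
    pd j (fun x : R3 => eval (fun i => x i) p) x = eval (fun i => x i) (pderiv j p) := by
  rw [pd, (EuclideanSpace.hasFDerivAt_eval p x).fderiv]
  simp

section mkQ

variable (a b c : ℝ)

@[simp] theorem re_mkQ : (mkQ a b c).re = a := rfl
@[simp] theorem imI_mkQ : (mkQ a b c).imI = b := rfl
@[simp] theorem imJ_mkQ : (mkQ a b c).imJ = c := rfl
@[simp] theorem imK_mkQ : (mkQ a b c).imK = 0 := rfl

theorem e1_eq_mkQ : e1 = mkQ 0 1 0 := rfl
theorem e2_eq_mkQ : e2 = mkQ 0 0 1 := rfl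

theorem mkQ_eq_add_smul : mkQ a b c = a • 1 + b • e1 + c • e2 := by
  ext <;> simp [e1_eq_mkQ, e2_eq_mkQ]

end mkQ

theorem DbarL_eq_zero_and_DL_eq_zero_iff (f : R3 → ℍ[ℝ]) (x : R3) :
    DbarL f x = 0 ∧ DL f x = 0 ↔ pd 0 f x = 0 ∧ e1 * pd 1 f x + e2 * pd 2 f x = 0 := by
  rw [DbarL, DL, add_assoc, sub_sub]
  constructor
  · rintro ⟨hplus, hminus⟩
    constructor
    · linear_combination (norm := module) (2⁻¹ : ℝ) • hplus + (2⁻¹ : ℝ) • hminus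
    · linear_combination (norm := module) (2⁻¹ : ℝ) • hplus - (2⁻¹ : ℝ) • hminus
  · rintro ⟨h₀, h₁⟩
    simp [h₀, h₁]

theorem forall_eval_eq_zero_iff (p : MvPolynomial (Fin 3) ℝ) :
    (∀ x : R3, eval (fun i => x i) p = 0) ↔ p = 0 := by
  refine ⟨fun h => MvPolynomial.funext fun v => ?_, fun h x => by simp [h]⟩
  simpa using h (WithLp.toLp 2 v)

def polyMap (p₀ p₁ p₂ : MvPolynomial (Fin 3) ℝ) (x : R3) : ℍ[ℝ] :=
  mkQ (eval (fun i => x i) p₀) (eval (fun i => x i) p₁) (eval (fun i => x i) p₂)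

section polyMap

variable (p₀ p₁ p₂ q₀ q₁ q₂ : MvPolynomial (Fin 3) ℝ)

theorem pd_polyMap (j : Fin 3) (x : R3) :
    pd j (polyMap p₀ p₁ p₂) x = polyMap (pderiv j p₀) (pderiv j p₁) (pderiv j p₂) x := by
  have hd := ((((EuclideanSpace.hasFDerivAt_eval p₀ x).smul_const (1 : ℍ[ℝ])).add
    ((EuclideanSpace.hasFDerivAt_eval p₁ x).smul_const e1)).add
    ((EuclideanSpace.hasFDerivAt_eval p₂ x).smul_const e2)).congr_of_eventuallyEq
    (f₁ := polyMap p₀ p₁ p₂) (.of_forall fun _ => mkQ_eq_add_smul _ _ _)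
  rw [pd, hd.fderiv, polyMap, mkQ_eq_add_smul]
  simp

theorem forall_polyMap_eq_zero_iff :
    (∀ x, polyMap p₀ p₁ p₂ x = 0) ↔ p₀ = 0 ∧ p₁ = 0 ∧ p₂ = 0 := by
  simp only [← forall_eval_eq_zero_iff, ← forall_and, polyMap, Quaternion.ext_iff]
  simp

theorem e1_mul_polyMap_add_e2_mul_polyMap_eq_zero_iff (x : R3) :
    e1 * polyMap p₀ p₁ p₂ x + e2 * polyMap q₀ q₁ q₂ x = 0 ↔
      eval (fun i => x i) (p₁ + q₂) = 0 ∧ eval (fun i => x i) p₀ = 0 ∧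
        eval (fun i => x i) q₀ = 0 ∧ eval (fun i => x i) (p₂ - q₁) = 0 := by
  simp only [Quaternion.ext_iff, polyMap, e1_eq_mkQ, e2_eq_mkQ, Quaternion.re_add,
    Quaternion.imI_add, Quaternion.imJ_add, Quaternion.imK_add, Quaternion.re_mul,
    Quaternion.imI_mul, Quaternion.imJ_mul, Quaternion.imK_mul, re_mkQ, imI_mkQ, imJ_mkQ, imK_mkQ,
    Quaternion.re_zero, Quaternion.imI_zero, Quaternion.imJ_zero, Quaternion.imK_zero, zero_mul,
    one_mul, mul_zero, zero_sub, sub_zero, sub_self, zero_add, add_zero, map_add, map_sub]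
  rw [← neg_add, neg_eq_zero, ← sub_eq_add_neg]

theorem polyMap_zero_reImPow_combination (n : ℕ) (a b : ℝ) :
    polyMap 0 (a • (reImPow ℝ n).1 + b • (reImPow ℝ n).2)
        (b • (reImPow ℝ n).1 - a • (reImPow ℝ n).2) =
      a • polyMap 0 (reImPow ℝ n).1 (-(reImPow ℝ n).2) +
        b • polyMap 0 (reImPow ℝ n).2 (reImPow ℝ n).1 := by
  funext x
  ext <;> simp [polyMap]
  ring

end polyMap

theorem polyMap_mem_inter_iff {n : ℕ} {p₀ p₁ p₂ : MvPolynomial (Fin 3) ℝ}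
    (h₀ : p₀.IsHomogeneous n) (h₁ : p₁.IsHomogeneous n) (h₂ : p₂.IsHomogeneous n) :
    polyMap p₀ p₁ p₂ ∈ MonoPoly n ∩ AntiPoly n ↔ (∀ i, pderiv i p₀ = 0) ∧ IsCRPair p₁ p₂ := by
  have hrep : ∃ q₀ q₁ q₂ : MvPolynomial (Fin 3) ℝ, q₀.IsHomogeneous n ∧ q₁.IsHomogeneous n ∧
      q₂.IsHomogeneous n ∧ ∀ x : R3, polyMap p₀ p₁ p₂ x = mkQ (eval (fun i => x i) q₀)
        (eval (fun i => x i) q₁) (eval (fun i => x i) q₂) :=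
    ⟨p₀, p₁, p₂, h₀, h₁, h₂, fun _ => rfl⟩
  rw [Set.mem_inter_iff, MonoPoly, AntiPoly, Set.mem_ofPred_eq, Set.mem_ofPred_eq,
    and_iff_right hrep, and_iff_right hrep, ← forall_and]
  simp only [DbarL_eq_zero_and_DL_eq_zero_iff, pd_polyMap, forall_and, forall_polyMap_eq_zero_iff,
    e1_mul_polyMap_add_e2_mul_polyMap_eq_zero_iff, forall_eval_eq_zero_iff, IsCRPair,
    Fin.forall_fin_succ, Fin.succ_zero_eq_one, Fin.succ_one_eq_two, IsEmpty.forall_iff, and_true,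
    sub_eq_zero]
  exact ⟨fun ⟨⟨h₀₀, h₀₁, h₀₂⟩, hsum, h₁₀, h₂₀, hcomm⟩ => ⟨⟨h₀₀, h₁₀, h₂₀⟩, h₀₁, h₀₂, hsum, hcomm⟩,
    fun ⟨⟨h₀₀, h₁₀, h₂₀⟩, h₀₁, h₀₂, hsum, hcomm⟩ => ⟨⟨h₀₀, h₀₁, h₀₂⟩, hsum, h₁₀, h₂₀, hcomm⟩⟩

theorem mem_inter_iff_exists_isCRPair {n : ℕ} (hn : n ≠ 0) {f : R3 → ℍ[ℝ]} :
    f ∈ MonoPoly n ∩ AntiPoly n ↔ ∃ p₁ p₂ : MvPolynomial (Fin 3) ℝ,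
      p₁.IsHomogeneous n ∧ p₂.IsHomogeneous n ∧ IsCRPair p₁ p₂ ∧ f = polyMap 0 p₁ p₂ := by
  constructor
  · intro hf
    obtain ⟨⟨p₀, p₁, p₂, h₀, h₁, h₂, hrep⟩, -⟩ := hf.1
    obtain rfl : f = polyMap p₀ p₁ p₂ := funext hrep
    obtain ⟨hp₀, hp⟩ := (polyMap_mem_inter_iff h₀ h₁ h₂).1 hf
    obtain rfl := h₀.eq_zero_of_forall_pderiv_eq_zero hn hp₀
    exact ⟨p₁, p₂, h₁, h₂, hp, rfl⟩
  · rintro ⟨p₁, p₂, h₁, h₂, hp, rfl⟩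
    exact (polyMap_mem_inter_iff (isHomogeneous_zero _ _ _) h₁ h₂).2 ⟨fun _ => map_zero _, hp⟩

def monogenicConstBasis (n : ℕ) : Fin 2 → R3 → ℍ[ℝ] :=
  ![polyMap 0 (reImPow ℝ n).1 (-(reImPow ℝ n).2), polyMap 0 (reImPow ℝ n).2 (reImPow ℝ n).1]

theorem inter_eq_span_monogenicConstBasis {n : ℕ} (hn : n ≠ 0) :
    MonoPoly n ∩ AntiPoly n = Submodule.span ℝ (Set.range (monogenicConstBasis n)) := by
  ext f
  rw [SetLike.mem_coe, monogenicConstBasis, Matrix.range_cons_cons_empty, Submodule.mem_span_pair,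
    mem_inter_iff_exists_isCRPair hn]
  constructor
  · rintro ⟨p₁, p₂, h₁, h₂, hp, rfl⟩
    obtain ⟨a, b, rfl, rfl⟩ := hp.exists_eq_reImPow h₁ h₂
    exact ⟨a, b, (polyMap_zero_reImPow_combination n a b).symm⟩
  · rintro ⟨a, b, rfl⟩
    obtain ⟨h₁, h₂⟩ := isHomogeneous_reImPow_combination ℝ n a b
    exact ⟨_, _, h₁, h₂, isCRPair_reImPow_combination ℝ n a b,
      (polyMap_zero_reImPow_combination n a b).symm⟩

theorem linearIndependent_monogenicConstBasis (n : ℕ) :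
    LinearIndependent ℝ (monogenicConstBasis n) := by
  rw [monogenicConstBasis, LinearIndependent.pair_iff]
  intro s t hst
  let x : R3 := EuclideanSpace.single 1 1
  obtain ⟨hP, hQ⟩ := eval_reImPow ℝ (v := fun i => x i) (by simp [x]) (by simp [x]) n
  have hx := congrFun hst x
  exact ⟨by simpa [polyMap, hP, hQ] using congrArg QuaternionAlgebra.imI hx,
    by simpa [polyMap, hP, hQ] using congrArg QuaternionAlgebra.imJ hx⟩

/-- For `n ≥ 1`, the homogeneous monogenic constants of degree `n` form a real vector
space of dimension `2`, contained in the space of vector parts of homogeneous monogenic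
polynomials of degree `n`. -/
theorem monogenic_constants_dim_two_and_sub_vec (n : ℕ) (hn : 1 ≤ n) :
    Module.finrank ℝ (Submodule.span ℝ (MonoPoly n ∩ AntiPoly n)) = 2 ∧
    (MonoPoly n ∩ AntiPoly n) ⊆
      {g | ∃ f ∈ MonoPoly n, ∀ x, g x = mkQ 0 (f x).imI (f x).imJ} := by
  have hn₀ : n ≠ 0 := Nat.one_le_iff_ne_zero.1 hn
  refine ⟨?_, fun g hg => ⟨g, hg.1, fun x => ?_⟩⟩
  · rw [inter_eq_span_monogenicConstBasis hn₀, Submodule.span_eq,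
      finrank_span_eq_card (linearIndependent_monogenicConstBasis n), Fintype.card_fin]
  · obtain ⟨p₁, p₂, -, -, -, rfl⟩ := (mem_inter_iff_exists_isCRPair hn₀).1 hg
    ext <;> simp [polyMap]
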